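/- arXiv:1501.02331 — 5 statements merged into one kernel-verified Lean document; each statement's English description precedes it below -/
import Mathlib

section
/- If ξ and η are Schwartz functions on ℝ, then the short-time Fourier transform V_η ξ is a Schwartz function on ℝ². -/
/-!
Put `W = 𝓕 η̄`. Fourier inversion gives `η̄ (t - x) = 𝓕 W (x - t)`, and Fubini then shows that
`V_η ξ (x, ω)` is the two-dimensional Fourier transform, at `(x, ω)`, of
`(a, t) ↦ e^{2πi a t} W a ξ t`. This function is Schwartz, being the tensor product `W ⊗ ξ`
multiplied by the chirp `e^{2πi a t}`, which has temperate growth; and the Fourier transform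
maps Schwartz functions to Schwartz functions.
-/

open Real Complex MeasureTheory SchwartzMap
open scoped ContDiff FourierTransform ComplexConjugate

/-- The short-time Fourier transform of `ξ` with window `η`. -/
noncomputable def stft (η ξ : ℝ → ℂ) (z : ℝ × ℝ) : ℂ :=
  ∫ t : ℝ, ξ t * (starRingEnd ℂ) (η (t - z.1)) *
    Complex.exp (-(2 * (Real.pi : ℂ) * Complex.I * (t : ℂ) * (z.2 : ℂ)))

theorem ContinuousLinearMap.norm_iteratedFDeriv_comp_right_le {𝕜 D E F : Type*}
    [NontriviallyNormedField 𝕜] [NormedAddCommGroup D] [NormedSpace 𝕜 D]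
    [NormedAddCommGroup E] [NormedSpace 𝕜 E] [NormedAddCommGroup F] [NormedSpace 𝕜 F]
    (L : D →L[𝕜] E) {f : E → F} (hf : ContDiff 𝕜 ∞ f) (x : D) (i : ℕ) :
    ‖iteratedFDeriv 𝕜 i (f ∘ L) x‖ ≤ ‖iteratedFDeriv 𝕜 i f (L x)‖ * ‖L‖ ^ i := by
  rw [L.iteratedFDeriv_comp_right hf x (mod_cast le_top)]
  simpa using ContinuousMultilinearMap.norm_compContinuousLinearMap_le _ fun _ : Fin i => L

namespace SchwartzMap

variable {D D' E F G : Type*}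
  [NormedAddCommGroup D] [NormedSpace ℝ D] [NormedAddCommGroup D'] [NormedSpace ℝ D']
  [NormedAddCommGroup E] [NormedSpace ℝ E] [NormedAddCommGroup F] [NormedSpace ℝ F]
  [NormedAddCommGroup G] [NormedSpace ℝ G]

theorem norm_iteratedFDeriv_comp_fst_le (f : 𝓢(D, E)) (p : D × D') (i : ℕ) :
    ‖iteratedFDeriv ℝ i (fun q : D × D' => f q.1) p‖ ≤ ‖iteratedFDeriv ℝ i f p.1‖ :=
  ((ContinuousLinearMap.fst ℝ D D').norm_iteratedFDeriv_comp_right_le (f.smooth ⊤) p i).trans <|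
    mul_le_of_le_one_right (norm_nonneg _) <|
      pow_le_one₀ (norm_nonneg _) (ContinuousLinearMap.norm_fst_le ℝ D D')

theorem norm_iteratedFDeriv_comp_snd_le (g : 𝓢(D', F)) (p : D × D') (i : ℕ) :
    ‖iteratedFDeriv ℝ i (fun q : D × D' => g q.2) p‖ ≤ ‖iteratedFDeriv ℝ i g p.2‖ :=
  ((ContinuousLinearMap.snd ℝ D D').norm_iteratedFDeriv_comp_right_le (g.smooth ⊤) p i).trans <|
    mul_le_of_le_one_right (norm_nonneg _) <|
      pow_le_one₀ (norm_nonneg _) (ContinuousLinearMap.norm_snd_le ℝ D D')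

theorem norm_pow_mul_norm_iteratedFDeriv_tensor_le (B : E →L[ℝ] F →L[ℝ] G)
    (f : 𝓢(D, E)) (g : 𝓢(D', F)) (k n : ℕ) (p : D × D') :
    ‖p‖ ^ k * ‖iteratedFDeriv ℝ n (fun q : D × D' => B (f q.1) (g q.2)) p‖ ≤
      ‖B‖ * 2 ^ n *
        ((2 ^ k * ((Finset.Iic (k, n)).sup fun m => SchwartzMap.seminorm ℝ m.1 m.2) f) *
          (2 ^ k * ((Finset.Iic (k, n)).sup fun m => SchwartzMap.seminorm ℝ m.1 m.2) g)) := by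
  set Sf := 2 ^ k * ((Finset.Iic (k, n)).sup fun m => SchwartzMap.seminorm ℝ m.1 m.2) f
  set Sg := 2 ^ k * ((Finset.Iic (k, n)).sup fun m => SchwartzMap.seminorm ℝ m.1 m.2) g
  have hp : ‖p‖ ^ k ≤ (1 + ‖p.1‖) ^ k * (1 + ‖p.2‖) ^ k := by
    rw [← mul_pow, Prod.norm_def]
    gcongr
    apply max_le <;> nlinarith [norm_nonneg p.1, norm_nonneg p.2]
  have hf : ∀ i ∈ Finset.range (n + 1), (1 + ‖p.1‖) ^ k * ‖iteratedFDeriv ℝ i f p.1‖ ≤ Sf :=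
    fun i hi => one_add_le_sup_seminorm_apply (m := (k, n)) le_rfl
      (Finset.mem_range_succ_iff.mp hi) f p.1
  have hg : ∀ i ∈ Finset.range (n + 1),
      (1 + ‖p.2‖) ^ k * ‖iteratedFDeriv ℝ (n - i) g p.2‖ ≤ Sg :=
    fun i _ => one_add_le_sup_seminorm_apply (m := (k, n)) le_rfl (Nat.sub_le n i) g p.2
  calc ‖p‖ ^ k * ‖iteratedFDeriv ℝ n (fun q : D × D' => B (f q.1) (g q.2)) p‖
      ≤ ((1 + ‖p.1‖) ^ k * (1 + ‖p.2‖) ^ k) * (‖B‖ * ∑ i ∈ Finset.range (n + 1),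
          n.choose i * ‖iteratedFDeriv ℝ i f p.1‖ * ‖iteratedFDeriv ℝ (n - i) g p.2‖) := by
        gcongr
        refine (B.norm_iteratedFDeriv_le_of_bilinear ((f.smooth ⊤).comp contDiff_fst)
          ((g.smooth ⊤).comp contDiff_snd) p (mod_cast le_top)).trans ?_
        gcongr with i
        · exact norm_iteratedFDeriv_comp_fst_le f p i
        · exact norm_iteratedFDeriv_comp_snd_le g p (n - i)
    _ = ‖B‖ * ∑ i ∈ Finset.range (n + 1), n.choose i *
          ((1 + ‖p.1‖) ^ k * ‖iteratedFDeriv ℝ i f p.1‖) *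
          ((1 + ‖p.2‖) ^ k * ‖iteratedFDeriv ℝ (n - i) g p.2‖) := by
        rw [Finset.mul_sum, Finset.mul_sum, Finset.mul_sum]
        exact Finset.sum_congr rfl fun i _ => by ring
    _ ≤ ‖B‖ * ∑ i ∈ Finset.range (n + 1), n.choose i * Sf * Sg := by
        gcongr with i hi
        · exact hf i hi
        · exact hg i hi
    _ = ‖B‖ * 2 ^ n * (Sf * Sg) := by
        rw [← Finset.sum_mul, ← Finset.sum_mul]
        push_cast [← Nat.cast_sum, Nat.sum_range_choose]
        ring

noncomputable def tensor (B : E →L[ℝ] F →L[ℝ] G) (f : 𝓢(D, E)) (g : 𝓢(D', F)) :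
    𝓢(D × D', G) where
  toFun p := B (f p.1) (g p.2)
  smooth' := B.isBoundedBilinearMap.contDiff.comp
    (((f.smooth ⊤).comp contDiff_fst).prodMk ((g.smooth ⊤).comp contDiff_snd))
  decay' k n := ⟨_, norm_pow_mul_norm_iteratedFDeriv_tensor_le B f g k n⟩

@[simp]
theorem tensor_apply (B : E →L[ℝ] F →L[ℝ] G) (f : 𝓢(D, E)) (g : 𝓢(D', F)) (p : D × D') :
    tensor B f g p = B (f p.1) (g p.2) :=
  rfl

end SchwartzMap

theorem Real.iteratedDeriv_fourierChar (n : ℕ) :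
    iteratedDeriv n (𝐞 · : ℝ → ℂ) = fun x => (2 * π * I) ^ n * 𝐞 x := by
  induction n with
  | zero => simp
  | succ n ih =>
    ext x
    rw [iteratedDeriv_succ, ih, deriv_const_mul _ differentiable_fourierChar.differentiableAt,
      deriv_fourierChar, pow_succ]
    ring

theorem Real.hasTemperateGrowth_fourierChar : Function.HasTemperateGrowth (𝐞 · : ℝ → ℂ) := by
  refine ⟨contDiff_of_differentiable_iteratedDeriv fun m _ => ?_,
    fun n => ⟨0, (2 * π) ^ n, fun x => ?_⟩⟩
  · rw [iteratedDeriv_fourierChar]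
    exact differentiable_fourierChar.const_mul _
  · rw [norm_iteratedFDeriv_eq_norm_iteratedDeriv, iteratedDeriv_fourierChar]
    simp [abs_of_pos pi_pos, Circle.norm_coe]

theorem Real.hasTemperateGrowth_fourierChar_mul :
    Function.HasTemperateGrowth fun p : ℝ × ℝ => (𝐞 (p.1 * p.2) : ℂ) :=
  hasTemperateGrowth_fourierChar.comp <|
    (ContinuousLinearMap.mul ℝ ℝ).bilinear_hasTemperateGrowth
      (ContinuousLinearMap.fst ℝ ℝ ℝ).hasTemperateGrowth
      (ContinuousLinearMap.snd ℝ ℝ ℝ).hasTemperateGrowth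

section Fourier

variable {U V E : Type*}
  [NormedAddCommGroup U] [InnerProductSpace ℝ U] [FiniteDimensional ℝ U]
  [MeasurableSpace U] [BorelSpace U]
  [NormedAddCommGroup V] [InnerProductSpace ℝ V] [FiniteDimensional ℝ V]
  [MeasurableSpace V] [BorelSpace V]
  [NormedAddCommGroup E] [NormedSpace ℂ E]

theorem SchwartzMap.fourier_fourier_apply [CompleteSpace E] (f : 𝓢(V, E)) (w : V) :
    𝓕 (𝓕 f) w = f (-w) := by
  have h := congrArg (· (-w)) (FourierTransform.fourierInv_fourier_eq (F := 𝓢(V, E)) f)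
  rw [fourierInv_apply_eq] at h
  simpa using h

/-- `U × V` carries the sup norm and is no inner product space, so the Fourier transform is
taken on `WithLp 2 (U × V)` and transported back. -/
theorem SchwartzMap.exists_fourier_prod (g : 𝓢(U × V, E)) :
    ∃ F : 𝓢(U × V, E), ∀ z : U × V,
      F z = ∫ p : U × V, 𝐞 (-(inner ℝ p.1 z.1 + inner ℝ p.2 z.2)) • g p := by
  let e := WithLp.prodContinuousLinearEquiv 2 ℝ U V
  refine ⟨compCLMOfContinuousLinearEquiv ℂ e.symm
    (𝓕 (compCLMOfContinuousLinearEquiv ℂ e g)), fun z => ?_⟩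
  rw [compCLMOfContinuousLinearEquiv_apply, Function.comp_apply, fourier_coe, fourier_eq,
    ← (WithLp.volume_preserving_symm_measurableEquiv_toLp_prod U V).integral_comp']
  rfl

end Fourier

theorem integral_fourierChar_smul_chirp (W ξ : 𝓢(ℝ, ℂ)) (z : ℝ × ℝ) :
    ∫ p : ℝ × ℝ, 𝐞 (-(p.1 * z.1 + p.2 * z.2)) • (𝐞 (p.1 * p.2) * (W p.1 * ξ p.2)) =
      ∫ t : ℝ, ξ t * 𝓕 W (z.1 - t) * 𝐞 (-(t * z.2)) := by
  have hint : Integrable fun p : ℝ × ℝ =>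
      𝐞 (-(p.1 * z.1 + p.2 * z.2)) • (𝐞 (p.1 * p.2) * (W p.1 * ξ p.2)) := by
    rw [← integrable_norm_iff (by fun_prop)]
    simpa [Circle.norm_smul, Circle.norm_coe] using
      (tensor (ContinuousLinearMap.mul ℝ ℂ) W ξ).integrable.norm
  have hphase : ∀ a b : ℝ, (𝐞 (-(a * z.1 + b * z.2)) * 𝐞 (a * b) : ℂ) =
      𝐞 (-(b * z.2)) * 𝐞 (-(a * (z.1 - b))) := by
    intro a b
    rw [← Circle.coe_mul, ← Circle.coe_mul, ← AddChar.map_add_eq_mul, ← AddChar.map_add_eq_mul]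
    ring_nf
  rw [Measure.volume_eq_prod, integral_prod_symm _ hint]
  congr with b
  calc ∫ a : ℝ, 𝐞 (-(a * z.1 + b * z.2)) • (𝐞 (a * b) * (W a * ξ b))
      = ∫ a : ℝ, (ξ b * 𝐞 (-(b * z.2))) * 𝐞 (-(a * (z.1 - b))) • W a := by
        congr with a
        simp only [Circle.smul_def, smul_eq_mul]
        linear_combination (W a * ξ b) * hphase a b
    _ = ξ b * 𝓕 W (z.1 - b) * 𝐞 (-(b * z.2)) := by
        rw [integral_const_mul, fourier_coe, fourier_real_eq]
        ring

theorem stft_eq_integral_fourierChar (η ξ : ℝ → ℂ) (z : ℝ × ℝ) :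
    stft η ξ z = ∫ t : ℝ, ξ t * conj (η (t - z.1)) * 𝐞 (-(t * z.2)) := by
  simp only [stft, fourierChar_apply]
  congr with t
  congr 2
  push_cast
  ring

/-- If `ξ, η` are Schwartz on `ℝ` then `V_η ξ` is Schwartz on `ℝ²`. -/
theorem stft_schwartz (ξ η : SchwartzMap ℝ ℂ) :
    ∃ F : SchwartzMap (ℝ × ℝ) ℂ, ∀ z : ℝ × ℝ, F z = stft (fun t => η t) (fun t => ξ t) z := by
  let W : 𝓢(ℝ, ℂ) := 𝓕 (η.postcompCLM (conjCLE : ℂ →L[ℝ] ℂ))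
  obtain ⟨F, hF⟩ := (smulLeftCLM ℂ (fun p : ℝ × ℝ => (𝐞 (p.1 * p.2) : ℂ))
    (tensor (ContinuousLinearMap.mul ℝ ℂ) W ξ)).exists_fourier_prod
  refine ⟨F, fun z => ?_⟩
  simp only [hF, smulLeftCLM_apply_apply hasTemperateGrowth_fourierChar_mul, tensor_apply,
    ContinuousLinearMap.mul_apply', smul_eq_mul, Real.inner_apply]
  rw [integral_fourierChar_smul_chirp, stft_eq_integral_fourierChar]
  congr with t
  rw [fourier_fourier_apply, neg_sub, postcompCLM_apply, ContinuousLinearEquiv.coe_coe,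
    conjCLE_apply]
end

section
/- Let A be a unital *-algebra with a faithful positive trace tr, and let ∂₁, ∂₂ be commuting *-derivations on A with tr(∂ⱼ(a)) = 0 for all a. For any projection p = p* = p² in A, the action S[p] = (1/4π) tr((∂₁p)² + (∂₂p)²) satisfies S[p] ≥ |c₁(p)|, where c₁(p) = (1/2πi) tr(p(∂₁p ∂₂p − ∂₂p ∂₁p)). -/
/-!
Put `a = ∂₁p`, `b = ∂₂p` and `x = (a + i b) p`. Since `a` and `b` are self-adjoint and
`a = a p + p a` (Leibniz rule for `p² = p`), the trace property gives
`tr (x* x) = ½ tr (a² + b²) + i tr (p [a, b])`, and the same with `-i` for `(a - i b) p`.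
Both traces are nonnegative reals, which bounds `|tr (p [a, b])|` by `½ tr (a² + b²)`.
-/

open ComplexOrder

theorem star_eq_neg_of_mul_self_eq_neg_one {R : Type*} [Ring R] [StarRing R] (tr : R →+ ℂ)
    (hpos : ∀ a : R, 0 ≤ tr (star a * a)) (hfaith : ∀ a : R, tr (star a * a) = 0 → a = 0)
    {j : R} (hj : ∀ x : R, Commute j x) (hjj : j * j = -1) : star j = -j := by
  set e := j + star j
  have he : star e = e := by rw [star_add, star_star, add_comm]
  have hjj' : Commute j (star j) := hj _
  have hww : star j * star j = -1 := by rw [← star_mul, hjj, star_neg, star_one]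
  -- Positivity at `e` and at `j * e` gives `0 ≤ tr (e* e) ≤ 0`.
  have hje : star (j * e) * (j * e) = -(star e * e) := by
    have : star j * (j * e) = -e := by
      simp only [e, mul_add, ← mul_assoc, hjj, hjj'.eq, hww]
      noncomm_ring
    rw [star_mul, he, mul_assoc, this, mul_neg]
  have htr : tr (star e * e) = 0 :=
    le_antisymm (neg_nonneg.1 (by simpa only [hje, map_neg] using hpos (j * e))) (hpos e)
  rw [← sub_eq_zero, sub_neg_eq_add, add_comm]
  exact hfaith e htr

-- `star` on a `ℂ`-algebra that is a `StarRing` need not be conjugate-linear; the trace forces it on `i`.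
theorem star_I_smul_of_trace {A : Type*} [Ring A] [Algebra ℂ A] [StarRing A] (tr : A →ₗ[ℂ] ℂ)
    (hpos : ∀ a : A, 0 ≤ tr (star a * a))
    (hfaith : ∀ a : A, tr (star a * a) = 0 → a = 0) (a : A) :
    star (Complex.I • a) = -Complex.I • star a := by
  have hj : star (Complex.I • (1 : A)) = -(Complex.I • 1) :=
    star_eq_neg_of_mul_self_eq_neg_one tr.toAddMonoidHom hpos hfaith
      (fun x => by simp [Commute, SemiconjBy]) (by simp [smul_smul])
  rw [← mul_smul_one, star_mul, hj, neg_mul, smul_mul_assoc, one_mul, neg_smul]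

section Trace

variable {A : Type*} [Ring A] [Algebra ℂ A] {tr : A →ₗ[ℂ] ℂ}

theorem trace_mul_self_eq_two_mul_trace_mul (htr : ∀ a b : A, tr (a * b) = tr (b * a))
    {p a : A} (ha : a = a * p + p * a) : tr (a * a) = 2 * tr (p * (a * a)) := by
  calc tr (a * a) = tr ((a * p + p * a) * a) := by rw [← ha]
    _ = 2 * tr (p * (a * a)) := by rw [add_mul, map_add, mul_assoc, htr, ← mul_assoc, two_mul]

variable [StarRing A]

theorem trace_star_mul_mul_self (htr : ∀ a b : A, tr (a * b) = tr (b * a)) {p : A}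
    (hp : p * p = p) (hps : star p = p) (x : A) :
    tr (star (x * p) * (x * p)) = tr (p * (star x * x)) := by
  rw [star_mul, hps, ← mul_assoc, htr, ← mul_assoc, ← mul_assoc, hp, mul_assoc]

theorem star_add_I_smul_mul_self (hstarI : ∀ c : A, star (Complex.I • c) = -Complex.I • star c)
    {a b : A} (ha : IsSelfAdjoint a) (hb : IsSelfAdjoint b) :
    star (a + Complex.I • b) * (a + Complex.I • b)
      = a * a + b * b + Complex.I • (a * b - b * a) := by
  rw [star_add, hstarI, ha.star_eq, hb.star_eq, neg_smul, ← sub_eq_add_neg]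
  simp only [sub_mul, mul_add, smul_mul_assoc, mul_smul_comm, smul_smul, Complex.I_mul_I,
    neg_one_smul, smul_sub]
  abel

theorem trace_star_mul_self_add_I_smul_mul (htr : ∀ a b : A, tr (a * b) = tr (b * a))
    (hstarI : ∀ c : A, star (Complex.I • c) = -Complex.I • star c) {p a b : A}
    (hp : p * p = p) (hps : star p = p) (ha : IsSelfAdjoint a) (hb : IsSelfAdjoint b) :
    tr (star ((a + Complex.I • b) * p) * ((a + Complex.I • b) * p))
      = tr (p * (a * a + b * b)) + Complex.I * tr (p * (a * b - b * a)) := by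
  rw [trace_star_mul_mul_self htr hp hps, star_add_I_smul_mul_self hstarI ha hb, mul_add,
    mul_smul_comm, map_add, map_smul, smul_eq_mul]

end Trace

theorem Complex.norm_le_re_of_nonneg_add_I_mul {s q : ℂ} (h₁ : 0 ≤ s + Complex.I * q)
    (h₂ : 0 ≤ s - Complex.I * q) : ‖q‖ ≤ s.re := by
  rw [Complex.nonneg_iff] at h₁ h₂
  simp only [Complex.add_re, Complex.add_im, Complex.sub_re, Complex.sub_im, Complex.mul_re,
    Complex.mul_im, Complex.I_re, Complex.I_im, zero_mul, one_mul, zero_sub, zero_add] at h₁ h₂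
  have hre : q.re = 0 := by linarith
  calc ‖q‖ ≤ |q.re| + |q.im| := Complex.norm_le_abs_re_add_abs_im q
    _ ≤ s.re := by rw [hre, abs_zero, zero_add, abs_le]; constructor <;> linarith

theorem action_ge_topological_charge_general {A : Type*} [Ring A] [Algebra ℂ A] [StarRing A]
    (tr : A →ₗ[ℂ] ℂ)
    (htr : ∀ a b : A, tr (a * b) = tr (b * a))
    (hpos : ∀ a : A, 0 ≤ (tr (star a * a)).re ∧ (tr (star a * a)).im = 0)
    (hfaith : ∀ a : A, tr (star a * a) = 0 → a = 0)
    (d1 d2 : A →ₗ[ℂ] A)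
    (hd1 : ∀ a b : A, d1 (a * b) = d1 a * b + a * d1 b)
    (hd2 : ∀ a b : A, d2 (a * b) = d2 a * b + a * d2 b)
    (hstar1 : ∀ a : A, d1 (star a) = star (d1 a))
    (hstar2 : ∀ a : A, d2 (star a) = star (d2 a))
    (p : A) (hp : p * p = p) (hps : star p = p) :
    ‖(1 / (2 * (Real.pi : ℂ) * Complex.I)) *
        tr (p * (d1 p * d2 p - d2 p * d1 p))‖
      ≤ (1 / (4 * Real.pi)) * (tr (d1 p * d1 p + d2 p * d2 p)).re := by
  have hpos' : ∀ a : A, 0 ≤ tr (star a * a) :=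
    fun a => Complex.nonneg_iff.2 ⟨(hpos a).1, (hpos a).2.symm⟩
  have hstarI := star_I_smul_of_trace tr hpos' hfaith
  set a := d1 p
  set b := d2 p
  have ha : IsSelfAdjoint a := by rw [IsSelfAdjoint, ← hstar1, hps]
  have hb : IsSelfAdjoint b := by rw [IsSelfAdjoint, ← hstar2, hps]
  have haa := trace_mul_self_eq_two_mul_trace_mul htr (p := p) (a := a) (by rw [← hd1, hp])
  have hbb := trace_mul_self_eq_two_mul_trace_mul htr (p := p) (a := b) (by rw [← hd2, hp])
  have hplus := hpos' ((a + Complex.I • b) * p)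
  have hminus := hpos' ((a + Complex.I • -b) * p)
  rw [trace_star_mul_self_add_I_smul_mul htr hstarI hp hps ha hb] at hplus
  rw [trace_star_mul_self_add_I_smul_mul htr hstarI hp hps ha hb.neg, neg_mul_neg,
    show a * -b - -b * a = -(a * b - b * a) by noncomm_ring, mul_neg, map_neg, mul_neg,
    ← sub_eq_add_neg] at hminus
  have hs : tr (p * (a * a + b * b)) = tr (a * a + b * b) / 2 := by
    rw [mul_add, map_add, map_add, haa, hbb]
    ring
  have hcharge := Complex.norm_le_re_of_nonneg_add_I_mul hplus hminus
  rw [hs, Complex.div_ofNat_re] at hcharge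
  calc _ = ‖tr (p * (a * b - b * a))‖ / (2 * Real.pi) := by
        simp [abs_of_pos Real.pi_pos, div_eq_inv_mul]
    _ ≤ (tr (a * a + b * b)).re / 2 / (2 * Real.pi) := by gcongr
    _ = _ := by ring

/-- Basic Belavin–Polyakov bound `S[p] ≥ |c₁(p)|` for projections in a unital
*-algebra with a faithful positive invariant trace and two commuting *-derivations. -/
theorem action_ge_topological_charge {A : Type*} [Ring A] [Algebra ℂ A] [StarRing A]
    (tr : A →ₗ[ℂ] ℂ)
    (htr : ∀ a b : A, tr (a * b) = tr (b * a))
    (hpos : ∀ a : A, 0 ≤ (tr (star a * a)).re ∧ (tr (star a * a)).im = 0)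
    (hfaith : ∀ a : A, tr (star a * a) = 0 → a = 0)
    (d1 d2 : A →ₗ[ℂ] A)
    (hd1 : ∀ a b : A, d1 (a * b) = d1 a * b + a * d1 b)
    (hd2 : ∀ a b : A, d2 (a * b) = d2 a * b + a * d2 b)
    (hcomm : ∀ a : A, d1 (d2 a) = d2 (d1 a))
    (hstar1 : ∀ a : A, d1 (star a) = star (d1 a))
    (hstar2 : ∀ a : A, d2 (star a) = star (d2 a))
    (htr1 : ∀ a : A, tr (d1 a) = 0) (htr2 : ∀ a : A, tr (d2 a) = 0)
    (p : A) (hp : p * p = p) (hps : star p = p) :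
    ‖(1 / (2 * (Real.pi : ℂ) * Complex.I)) *
        tr (p * (d1 p * d2 p - d2 p * d1 p))‖
      ≤ (1 / (4 * Real.pi)) * (tr (d1 p * d1 p + d2 p * d2 p)).re :=
  action_ge_topological_charge_general tr htr hpos hfaith d1 d2 hd1 hd2 hstar1 hstar2 p hp hps
end

section
/- Let A be a unital *-algebra with faithful tracial state tr and commuting trace-annihilating derivations ∂₁, ∂₂, and let p be a projection in A. If p satisfies the self-duality equation (∂₁ + i∂₂)(p)·p = 0, then equality S[p] = c₁(p) holds, where S[p] = (1/4π) tr((∂₁p)² + (∂₂p)²) and c₁(p) = (1/2πi) tr(p(∂₁p ∂₂p − ∂₂p ∂₁p)). -/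
/-!
Write `a = ∂₁p`, `b = ∂₂p`. Differentiating `p² = p` gives `a = ap + pa`, so by cyclicity
`tr(a²) = 2 tr(a·ap)`, and likewise for `b`. Self-duality says `ap = -i·bp` and `bp = i·ap`, hence
`tr(a² + b²) = -2i tr(a·bp) + 2i tr(b·ap) = -2i tr(p[a, b])`, which is `S[p] = c₁(p)` after
dividing by `4π`.
-/

theorem leibniz_apply_idempotent {A : Type*} [Ring A] (d : A → A)
    (hd : ∀ a b : A, d (a * b) = d a * b + a * d b) {p : A} (hp : p * p = p) :
    d p = d p * p + p * d p := by
  simpa only [hp] using hd p p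

theorem trace_mul_self_eq_two_mul {R A : Type*} [CommSemiring R] [Semiring A] [Module R A]
    (tr : A →ₗ[R] R) (htr : ∀ a b : A, tr (a * b) = tr (b * a)) {p x : A}
    (hx : x = x * p + p * x) :
    tr (x * x) = 2 * tr (x * (x * p)) := by
  have hcyc : tr (x * (p * x)) = tr (x * (x * p)) := by
    rw [htr, mul_assoc, htr, mul_assoc]
  calc tr (x * x) = tr (x * (x * p)) + tr (x * (p * x)) := by
        rw [← map_add, ← mul_add, ← hx]
    _ = 2 * tr (x * (x * p)) := by rw [hcyc, two_mul]

theorem trace_sq_add_sq_of_selfDual {A : Type*} [Ring A] [Algebra ℂ A]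
    (tr : A →ₗ[ℂ] ℂ) (htr : ∀ a b : A, tr (a * b) = tr (b * a)) {p a b : A}
    (ha : a = a * p + p * a) (hb : b = b * p + p * b)
    (hsd : (a + Complex.I • b) * p = 0) :
    tr (a * a + b * b) = -(2 * Complex.I) * tr (p * (a * b - b * a)) := by
  rw [add_mul, smul_mul_assoc] at hsd
  have hap : a * p = -Complex.I • (b * p) := by
    linear_combination (norm := module) hsd
  have hbp : b * p = Complex.I • (a * p) := by
    rw [hap, smul_smul, mul_neg, Complex.I_mul_I, neg_neg, one_smul]
  have hcyc : ∀ x y : A, tr (x * (y * p)) = tr (p * (x * y)) := fun x y => by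
    rw [← mul_assoc, htr]
  calc tr (a * a + b * b) = 2 * tr (a * (a * p)) + 2 * tr (b * (b * p)) := by
        rw [map_add, trace_mul_self_eq_two_mul tr htr ha, trace_mul_self_eq_two_mul tr htr hb]
    _ = 2 * tr (a * (-Complex.I • (b * p))) + 2 * tr (b * (Complex.I • (a * p))) := by
        rw [← hap, ← hbp]
    _ = -(2 * Complex.I) * tr (p * (a * b - b * a)) := by
        simp only [mul_smul_comm, map_smul, hcyc, mul_sub, map_sub, smul_eq_mul]
        ring

theorem selfdual_action_eq_charge_general {A : Type*} [Ring A] [Algebra ℂ A]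
    (tr : A →ₗ[ℂ] ℂ)
    (htr : ∀ a b : A, tr (a * b) = tr (b * a))
    (d1 d2 : A →ₗ[ℂ] A)
    (hd1 : ∀ a b : A, d1 (a * b) = d1 a * b + a * d1 b)
    (hd2 : ∀ a b : A, d2 (a * b) = d2 a * b + a * d2 b)
    (p : A) (hp : p * p = p)
    (hsd : (d1 p + Complex.I • d2 p) * p = 0) :
    (1 / (4 * (Real.pi : ℂ))) * tr (d1 p * d1 p + d2 p * d2 p) =
      (1 / (2 * (Real.pi : ℂ) * Complex.I)) * tr (p * (d1 p * d2 p - d2 p * d1 p)) := by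
  rw [trace_sq_add_sq_of_selfDual tr htr (leibniz_apply_idempotent d1 hd1 hp)
    (leibniz_apply_idempotent d2 hd2 hp) hsd]
  have hπ : (Real.pi : ℂ) ≠ 0 := Complex.ofReal_ne_zero.mpr Real.pi_ne_zero
  field_simp
  rw [Complex.I_sq]
  ring

/-- If a projection `p` satisfies the self-duality equation `(∂₁ + i∂₂)(p)·p = 0`,
then `S[p] = c₁(p)`. -/
theorem selfdual_action_eq_charge {A : Type*} [Ring A] [Algebra ℂ A] [StarRing A]
    (tr : A →ₗ[ℂ] ℂ)
    (htr : ∀ a b : A, tr (a * b) = tr (b * a))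
    (hpos : ∀ a : A, 0 ≤ (tr (star a * a)).re ∧ (tr (star a * a)).im = 0)
    (hfaith : ∀ a : A, tr (star a * a) = 0 → a = 0)
    (d1 d2 : A →ₗ[ℂ] A)
    (hd1 : ∀ a b : A, d1 (a * b) = d1 a * b + a * d1 b)
    (hd2 : ∀ a b : A, d2 (a * b) = d2 a * b + a * d2 b)
    (hcomm : ∀ a : A, d1 (d2 a) = d2 (d1 a))
    (hstar1 : ∀ a : A, d1 (star a) = star (d1 a))
    (hstar2 : ∀ a : A, d2 (star a) = star (d2 a))
    (htr1 : ∀ a : A, tr (d1 a) = 0) (htr2 : ∀ a : A, tr (d2 a) = 0)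
    (p : A) (hp : p * p = p) (hps : star p = p)
    (hsd : (d1 p + Complex.I • d2 p) * p = 0) :
    (1 / (4 * (Real.pi : ℂ))) * tr (d1 p * d1 p + d2 p * d2 p) =
      (1 / (2 * (Real.pi : ℂ) * Complex.I)) * tr (p * (d1 p * d2 p - d2 p * d1 p)) :=
  selfdual_action_eq_charge_general tr htr d1 d2 hd1 hd2 p hp hsd
end

section
/- Let A be a *-algebra with trace and derivations as above, and p a projection in A. The critical point equation for the action S[p] = (1/4π) tr((∂₁p)²+(∂₂p)²) under variations δp = (1−p)zp + pz*(1−p) (z ∈ A arbitrary) is equivalent to p·Δ(p) = Δ(p)·p, where Δ = ∂₁² + ∂₂². -/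
/-- The critical point equation for the sigma-model action under admissible variations
`δp = (1-p)zp + pz*(1-p)` is equivalent to `[p, Δ(p)] = 0` with `Δ = ∂₁² + ∂₂²`. -/
theorem critical_point_iff_commutes {A : Type*} [Ring A] [Algebra ℂ A] [StarRing A]
    (tr : A →ₗ[ℂ] ℂ)
    (htr : ∀ a b : A, tr (a * b) = tr (b * a))
    (hpos : ∀ a : A, 0 ≤ (tr (star a * a)).re ∧ (tr (star a * a)).im = 0)
    (hfaith : ∀ a : A, tr (star a * a) = 0 → a = 0)
    (d1 d2 : A →ₗ[ℂ] A)
    (hd1 : ∀ a b : A, d1 (a * b) = d1 a * b + a * d1 b)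
    (hd2 : ∀ a b : A, d2 (a * b) = d2 a * b + a * d2 b)
    (hcomm : ∀ a : A, d1 (d2 a) = d2 (d1 a))
    (hstar1 : ∀ a : A, d1 (star a) = star (d1 a))
    (hstar2 : ∀ a : A, d2 (star a) = star (d2 a))
    (htr1 : ∀ a : A, tr (d1 a) = 0) (htr2 : ∀ a : A, tr (d2 a) = 0)
    (p : A) (hp : p * p = p) (hps : star p = p) :
    (∀ z : A, tr ((d1 (d1 p) + d2 (d2 p)) * ((1 - p) * z * p + p * star z * (1 - p))) = 0)
      ↔ p * (d1 (d1 p) + d2 (d2 p)) = (d1 (d1 p) + d2 (d2 p)) * p := by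
  set D := d1 (d1 p) + d2 (d2 p) with hD
  have hsD : star D = D := by
    simp [hD, star_add, ← hstar1, ← hstar2, hps]
  set X := p * D * (1 - p) with hX
  set Y := (1 - p) * D * p with hY
  have hXY : star Y = X := by
    simp [hY, hX, star_mul, hsD, hps, mul_assoc]
  -- trace rewrite
  have key : ∀ z : A, tr (D * ((1 - p) * z * p + p * star z * (1 - p)))
      = tr (X * z) + tr (Y * star z) := by
    intro z
    have e1 : D * ((1 - p) * z * p) = (D * (1 - p) * z) * p := by
      simp [mul_assoc]
    have e2 : D * (p * star z * (1 - p)) = (D * p * star z) * (1 - p) := by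
      simp [mul_assoc]
    have e3 : p * (D * (1 - p) * z) = X * z := by simp [hX, mul_assoc]
    have e4 : (1 - p) * (D * p * star z) = Y * star z := by simp [hY, mul_assoc]
    rw [mul_add, map_add, e1, e2, htr (D * (1 - p) * z) p,
      htr (D * p * star z) (1 - p), e3, e4]
  constructor
  · intro h
    have hz : tr (X * Y) + tr (Y * star Y) = 0 := by rw [← key Y]; exact h Y
    have h1 : tr (X * Y) = tr (star Y * Y) := by rw [hXY]
    have h2 : tr (Y * star Y) = tr (star (star Y) * star Y) := by rw [star_star]
    have hs : tr (star Y * Y) + tr (star (star Y) * star Y) = 0 := by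
      rw [← h1, ← h2]; exact hz
    obtain ⟨r1, i1⟩ := hpos Y
    obtain ⟨r2, i2⟩ := hpos (star Y)
    have hre : (tr (star Y * Y)).re + (tr (star (star Y) * star Y)).re = 0 := by
      have := congrArg Complex.re hs
      simpa using this
    have hz1 : tr (star Y * Y) = 0 := by
      apply Complex.ext
      · rw [Complex.zero_re]; linarith
      · rw [Complex.zero_im]; exact i1
    have hz2 : tr (star (star Y) * star Y) = 0 := by
      apply Complex.ext
      · rw [Complex.zero_re]; linarith
      · rw [Complex.zero_im]; exact i2
    have hY0 : Y = 0 := hfaith Y hz1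
    have hX0 : X = 0 := by rw [← hXY]; exact hfaith (star Y) hz2
    -- from X = 0 and Y = 0 deduce commutation
    have e1 : p * D - p * D * p = 0 := by
      have : p * D * (1 - p) = p * D - p * D * p := by
        rw [mul_sub, mul_one]
      rw [← this]; exact hX0
    have e2 : D * p - p * (D * p) = 0 := by
      have : (1 - p) * D * p = D * p - p * (D * p) := by
        rw [sub_mul, sub_mul, one_mul, mul_assoc]
      rw [← this]; exact hY0
    have := sub_eq_zero.mp e1
    have h2' := sub_eq_zero.mp e2
    rw [mul_assoc] at this
    rw [h2', this]
  · intro h z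
    rw [key z]
    have hX0 : X = 0 := by
      have : p * D * p = D * p := by rw [h, mul_assoc, hp]
      rw [hX, mul_sub, mul_one, this, h, sub_self]
    have hY0 : Y = 0 := by
      have : p * (D * p) = D * p := by rw [← h, ← mul_assoc, hp, h]
      rw [hY, sub_mul, sub_mul, one_mul, mul_assoc, this, sub_self]
    simp [hX0, hY0]
end

section
/- Let E be an equivalence A–B bimodule carrying covariant derivatives ∇₁, ∇₂ compatible with derivations ∂₁, ∂₂ on A and B and with both hermitian products, and with compatible invariant traces on A and B. If ψ ∈ E satisfies ⟨ψ,ψ⟩_B = 1_B, then the topological charge of p_ψ = ⟨ψ,ψ⟩_A satisfies c₁(p_ψ) = −(1/2πi) tr_B ⟨ψ, F₁₂ ψ⟩_B, where F₁₂ = ∇₁∇₂ − ∇₂∇₁. -/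
/-- For `ψ` with `⟨ψ,ψ⟩_B = 1`, the topological charge of `p_ψ = ⟨ψ,ψ⟩_A` equals
`-(1/2πi) tr_B ⟨ψ, F₁₂ ψ⟩_B` where `F₁₂ = ∇₁∇₂ - ∇₂∇₁`. -/
theorem charge_eq_curvature {A B E : Type*}
    [Ring A] [Algebra ℂ A] [StarRing A]
    [Ring B] [Algebra ℂ B] [StarRing B] [AddCommGroup E] [Module ℂ E]
    (smulA : A → E → E) (smulB : E → B → E) (innA : E → E → A) (innB : E → E → B)
    (hAlin : ∀ (a : A) (ξ η : E), innA (smulA a ξ) η = a * innA ξ η)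
    (hAstar : ∀ ξ η : E, star (innA ξ η) = innA η ξ)
    (hAadd₁ : ∀ ξ η ζ : E, innA (ξ + η) ζ = innA ξ ζ + innA η ζ)
    (hAadd₂ : ∀ ξ η ζ : E, innA ξ (η + ζ) = innA ξ η + innA ξ ζ)
    (hBlin : ∀ (ξ η : E) (b : B), innB ξ (smulB η b) = innB ξ η * b)
    (hBstar : ∀ ξ η : E, star (innB ξ η) = innB η ξ)
    (hBadd₁ : ∀ ξ η ζ : E, innB (ξ + η) ζ = innB ξ ζ + innB η ζ)
    (hBadd₂ : ∀ ξ η ζ : E, innB ξ (η + ζ) = innB ξ η + innB ξ ζ)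
    (hsA_one : ∀ ξ : E, smulA 1 ξ = ξ)
    (hsA_mul : ∀ (a a' : A) (ξ : E), smulA (a * a') ξ = smulA a (smulA a' ξ))
    (hsA_add : ∀ (a a' : A) (ξ : E), smulA (a + a') ξ = smulA a ξ + smulA a' ξ)
    (hsA_addE : ∀ (a : A) (ξ η : E), smulA a (ξ + η) = smulA a ξ + smulA a η)
    (hsB_one : ∀ ξ : E, smulB ξ 1 = ξ)
    (hsB_mul : ∀ (ξ : E) (b b' : B), smulB ξ (b * b') = smulB (smulB ξ b) b')
    (hsB_add : ∀ (ξ : E) (b b' : B), smulB ξ (b + b') = smulB ξ b + smulB ξ b')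
    (hsB_addE : ∀ (ξ η : E) (b : B), smulB (ξ + η) b = smulB ξ b + smulB η b)
    (hassoc : ∀ ξ η ζ : E, smulA (innA ξ η) ζ = smulB ξ (innB η ζ))
    -- derivations on A and on B
    (dA1 dA2 : A →ₗ[ℂ] A) (dB1 dB2 : B →ₗ[ℂ] B)
    (hdA1 : ∀ a a' : A, dA1 (a * a') = dA1 a * a' + a * dA1 a')
    (hdA2 : ∀ a a' : A, dA2 (a * a') = dA2 a * a' + a * dA2 a')
    (hdB1 : ∀ b b' : B, dB1 (b * b') = dB1 b * b' + b * dB1 b')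
    (hdB2 : ∀ b b' : B, dB2 (b * b') = dB2 b * b' + b * dB2 b')
    (hcommA : ∀ a : A, dA1 (dA2 a) = dA2 (dA1 a))
    (hcommB : ∀ b : B, dB1 (dB2 b) = dB2 (dB1 b))
    -- faithful tracial states annihilating the derivations, with compatibility
    (trA : A →ₗ[ℂ] ℂ) (trB : B →ₗ[ℂ] ℂ)
    (htrA : ∀ a a' : A, trA (a * a') = trA (a' * a))
    (htrB : ∀ b b' : B, trB (b * b') = trB (b' * b))
    (htrA1 : ∀ a : A, trA (dA1 a) = 0) (htrA2 : ∀ a : A, trA (dA2 a) = 0)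
    (htrB1 : ∀ b : B, trB (dB1 b) = 0) (htrB2 : ∀ b : B, trB (dB2 b) = 0)
    (htrcomp : ∀ ξ η : E, trA (innA ξ η) = trB (innB η ξ))
    -- covariant derivatives with the two Leibniz rules
    (nab1 nab2 : E → E)
    (hnab1L : ∀ (a : A) (ξ : E), nab1 (smulA a ξ) = smulA (dA1 a) ξ + smulA a (nab1 ξ))
    (hnab2L : ∀ (a : A) (ξ : E), nab2 (smulA a ξ) = smulA (dA2 a) ξ + smulA a (nab2 ξ))
    (hnab1R : ∀ (ξ : E) (b : B), nab1 (smulB ξ b) = smulB (nab1 ξ) b + smulB ξ (dB1 b))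
    (hnab2R : ∀ (ξ : E) (b : B), nab2 (smulB ξ b) = smulB (nab2 ξ) b + smulB ξ (dB2 b))
    -- compatibility with both hermitian structures
    (hcompA1 : ∀ ξ η : E, dA1 (innA ξ η) = innA (nab1 ξ) η + innA ξ (nab1 η))
    (hcompA2 : ∀ ξ η : E, dA2 (innA ξ η) = innA (nab2 ξ) η + innA ξ (nab2 η))
    (hcompB1 : ∀ ξ η : E, dB1 (innB ξ η) = innB (nab1 ξ) η + innB ξ (nab1 η))
    (hcompB2 : ∀ ξ η : E, dB2 (innB ξ η) = innB (nab2 ξ) η + innB ξ (nab2 η))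
    (ψ : E) (hψ : innB ψ ψ = 1) :
    (1 / (2 * (Real.pi : ℂ) * Complex.I)) *
        trA (innA ψ ψ * (dA1 (innA ψ ψ) * dA2 (innA ψ ψ) - dA2 (innA ψ ψ) * dA1 (innA ψ ψ))) =
      -((1 / (2 * (Real.pi : ℂ) * Complex.I)) *
        trB (innB ψ (nab1 (nab2 ψ) - nab2 (nab1 ψ)))) := by
  -- helper lemmas
  have sB0 : ∀ ξ : E, smulB ξ 0 = 0 := by
    intro ξ
    have h := hsB_add ξ 0 0
    rw [add_zero] at h
    exact left_eq_add.mp h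
  have iB0 : ∀ ξ : E, innB ξ 0 = 0 := by
    intro ξ
    have h := hBadd₂ ξ 0 0
    rw [add_zero] at h
    exact left_eq_add.mp h
  have iBneg : ∀ ξ η : E, innB ξ (-η) = -innB ξ η := by
    intro ξ η
    have h := hBadd₂ ξ η (-η)
    rw [add_neg_cancel, iB0] at h
    exact eq_neg_of_add_eq_zero_right h.symm
  have iBsub : ∀ ξ η ζ : E, innB ξ (η - ζ) = innB ξ η - innB ξ ζ := by
    intro ξ η ζ
    rw [sub_eq_add_neg, hBadd₂, iBneg, ← sub_eq_add_neg]
  have hone : ∀ b : B, innB ψ (smulB ψ b) = b := by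
    intro b; rw [hBlin, hψ, one_mul]
  have hdB1_one : dB1 1 = 0 := by
    have h := hdB1 1 1
    simp only [one_mul, mul_one] at h
    exact left_eq_add.mp h
  have hdB2_one : dB2 1 = 0 := by
    have h := hdB2 1 1
    simp only [one_mul, mul_one] at h
    exact left_eq_add.mp h
  have hb1neg : innB (nab1 ψ) ψ = -(innB ψ (nab1 ψ)) := by
    have h := hcompB1 ψ ψ
    rw [hψ, hdB1_one] at h
    exact eq_neg_of_add_eq_zero_left h.symm
  have hb2neg : innB (nab2 ψ) ψ = -(innB ψ (nab2 ψ)) := by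
    have h := hcompB2 ψ ψ
    rw [hψ, hdB2_one] at h
    exact eq_neg_of_add_eq_zero_left h.symm
  have htr : ∀ (a : A) (ξ η : E), trA (a * innA ξ η) = trB (innB η (smulA a ξ)) := by
    intro a ξ η; rw [← hAlin, htrcomp]
  have hq1 : ∀ ξ : E, smulA (innA ψ ψ * dA1 (innA ψ ψ)) ξ =
      smulB ψ (innB ψ (nab1 ψ) * innB ψ ξ + innB (nab1 ψ) ξ) := by
    intro ξ
    rw [hsA_mul, hcompA1]
    simp only [hsA_add, hassoc, hBadd₂, hBlin, hψ, one_mul]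
  have hq2 : ∀ ξ : E, smulA (innA ψ ψ * dA2 (innA ψ ψ)) ξ =
      smulB ψ (innB ψ (nab2 ψ) * innB ψ ξ + innB (nab2 ψ) ξ) := by
    intro ξ
    rw [hsA_mul, hcompA2]
    simp only [hsA_add, hassoc, hBadd₂, hBlin, hψ, one_mul]
  have L1 : trA (innA ψ ψ * (dA1 (innA ψ ψ) * dA2 (innA ψ ψ))) =
      trB (innB ψ (nab1 ψ) * innB ψ (nab2 ψ)) + trB (innB (nab1 ψ) (nab2 ψ)) := by
    rw [hcompA2, mul_add, mul_add, ← mul_assoc, ← mul_assoc, map_add, htr, htr, hq1, hq1]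
    simp only [hone, hψ, mul_one, hb1neg, add_neg_cancel, sB0, iB0, map_zero, add_zero, map_add]
  have L2 : trA (innA ψ ψ * (dA2 (innA ψ ψ) * dA1 (innA ψ ψ))) =
      trB (innB ψ (nab2 ψ) * innB ψ (nab1 ψ)) + trB (innB (nab2 ψ) (nab1 ψ)) := by
    rw [hcompA1, mul_add, mul_add, ← mul_assoc, ← mul_assoc, map_add, htr, htr, hq2, hq2]
    simp only [hone, hψ, mul_one, hb2neg, add_neg_cancel, sB0, iB0, map_zero, add_zero, map_add]
  have R1 : trB (innB ψ (nab1 (nab2 ψ))) = -trB (innB (nab1 ψ) (nab2 ψ)) := by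
    have h := congrArg trB (hcompB1 ψ (nab2 ψ))
    rw [htrB1, map_add] at h
    exact eq_neg_of_add_eq_zero_right h.symm
  have R2 : trB (innB ψ (nab2 (nab1 ψ))) = -trB (innB (nab2 ψ) (nab1 ψ)) := by
    have h := congrArg trB (hcompB2 ψ (nab1 ψ))
    rw [htrB2, map_add] at h
    exact eq_neg_of_add_eq_zero_right h.symm
  rw [mul_sub, map_sub, L1, L2, iBsub, map_sub, R1, R2,
    htrB (innB ψ (nab1 ψ)) (innB ψ (nab2 ψ))]
  ring
end
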